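/- Let n ≥ 3 and ℓ ≥ 1 be integers. Call λ = (λ₁, …, λₙ) ∈ ℝⁿ a D_n-dominant weight if λ₁ ≥ λ₂ ≥ ⋯ ≥ λ_{n−1} ≥ |λₙ| and either all λᵢ ∈ ℤ or all λᵢ ∈ ½ + ℤ. Suppose λ is a D_n-dominant weight with λ₁ + λ₂ ≤ ℓ. Then there exists ν ∈ ℝⁿ which is either 0, or ±eᵢ for some standard basis vector eᵢ, or of the form ½(ε₁, …, εₙ) with every εᵢ ∈ {+1, −1}, such that μ = λ − ν is a D_n-dominant weight with μ₁ + μ₂ ≤ ℓ − 1. -/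

import Mathlib

/-!
If `λ₁ + λ₂ ≤ ℓ - 1` already, take `ν = 0`. Otherwise, if `λ₁ > λ₂`, integrality of the
differences gives `λ₁ - 1 ≥ λ₂`, so `λ - e₁` is still dominant. In the remaining case
`λ₁ = λ₂ > 0` (as `ℓ ≥ 1`), subtract the spin weight `ν` with `νᵢ = ½` where `λᵢ > 0` and
`νᵢ = -½` elsewhere: the gaps between consecutive entries of different sign are at least `1`,
so dominance survives, and the level drops by exactly one.
-/

/-- `lam` is a dominant weight for `D_n`: `λ₁ ≥ λ₂ ≥ ⋯ ≥ λ_{n−1} ≥ |λₙ|` and the entries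
are either all integers or all half-integers. -/
def DnDominant {n : ℕ} (lam : Fin n → ℝ) : Prop :=
  (∀ i j : Fin n, i ≤ j → (j : ℕ) + 1 < n → lam j ≤ lam i) ∧
  (∀ i : Fin n, (i : ℕ) + 1 < n → ∀ j : Fin n, (j : ℕ) + 1 = n → |lam j| ≤ lam i) ∧
  ((∀ i, ∃ m : ℤ, lam i = (m : ℝ)) ∨ (∀ i, ∃ m : ℤ, lam i = (m : ℝ) + 1 / 2))

section Scalar

variable {K : Type*} [Field K] [LinearOrder K]

theorem add_one_le_of_lt_of_sub_eq_intCast [IsStrictOrderedRing K] {a b : K}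
    (hint : ∃ m : ℤ, b - a = m) (hab : a < b) : a + 1 ≤ b := by
  obtain ⟨m, hm⟩ := hint
  have hm_pos : 0 < m := by exact_mod_cast hm ▸ sub_pos.mpr hab
  have : (1 : K) ≤ m := by exact_mod_cast hm_pos
  linarith

def halfSign (x : K) : K := if 0 < x then 1 / 2 else -(1 / 2)

theorem halfSign_eq_or (x : K) : halfSign x = 1 / 2 ∨ halfSign x = -(1 / 2) := by
  unfold halfSign
  split_ifs <;> simp

theorem sub_halfSign_le_sub_halfSign [IsStrictOrderedRing K] {x y : K} (hxy : x ≤ y)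
    (hint : ∃ m : ℤ, y - x = m) :
    x - halfSign x ≤ y - halfSign y := by
  unfold halfSign
  split_ifs with hx hy hy
  · linarith
  · linarith
  · linarith [add_one_le_of_lt_of_sub_eq_intCast hint (by linarith)]
  · linarith

theorem abs_sub_halfSign_le_sub_halfSign [IsStrictOrderedRing K] {x y : K} (hxy : |x| ≤ y)
    (hint : ∃ m : ℤ, y - x = m) (hhalf : ∃ m : ℤ, 2 * x = m) :
    |x - halfSign x| ≤ y - halfSign y := by
  obtain ⟨hxy₁, hxy₂⟩ := abs_le.mp hxy
  obtain ⟨m, hm⟩ := hhalf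
  rcases lt_trichotomy x 0 with hx | rfl | hx
  · have : 2 * x + 1 ≤ 0 :=
      add_one_le_of_lt_of_sub_eq_intCast ⟨-m, by push_cast; linarith⟩ (by linarith)
    simp only [halfSign, if_neg hx.not_gt, if_pos (by linarith : 0 < y)]
    rw [abs_of_nonpos (by linarith)]
    linarith
  · rcases hxy.lt_or_eq with hy | rfl
    · have := add_one_le_of_lt_of_sub_eq_intCast hint (by simpa using hy)
      simp only [halfSign, lt_irrefl, if_false, if_pos (by simpa using hy)]
      rw [abs_of_nonneg (by norm_num)]
      linarith
    · simp [halfSign]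
  · have : 0 + 1 ≤ 2 * x :=
      add_one_le_of_lt_of_sub_eq_intCast ⟨m, by linarith⟩ (by linarith)
    simp only [halfSign, if_pos hx, if_pos (by linarith : 0 < y)]
    rw [abs_of_nonneg (by linarith)]
    linarith

end Scalar

def IntegralOrHalfIntegral {ι : Type*} (v : ι → ℝ) : Prop :=
  (∀ i, ∃ m : ℤ, v i = m) ∨ (∀ i, ∃ m : ℤ, v i = m + 1 / 2)

namespace IntegralOrHalfIntegral

variable {ι : Type*} {v w : ι → ℝ}

theorem exists_sub_eq_intCast (hv : IntegralOrHalfIntegral v) (i j : ι) :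
    ∃ m : ℤ, v i - v j = m := by
  rcases hv with hv | hv <;>
  · obtain ⟨a, ha⟩ := hv i
    obtain ⟨b, hb⟩ := hv j
    exact ⟨a - b, by rw [ha, hb]; push_cast; ring⟩

theorem exists_two_mul_eq_intCast (hv : IntegralOrHalfIntegral v) (i : ι) :
    ∃ m : ℤ, 2 * v i = m := by
  rcases hv with hv | hv
  · obtain ⟨a, ha⟩ := hv i
    exact ⟨2 * a, by rw [ha]; push_cast; ring⟩
  · obtain ⟨a, ha⟩ := hv i
    exact ⟨2 * a + 1, by rw [ha]; push_cast; ring⟩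

theorem sub (hv : IntegralOrHalfIntegral v) (hw : IntegralOrHalfIntegral w) :
    IntegralOrHalfIntegral (v - w) := by
  rcases hv with hv | hv <;> rcases hw with hw | hw <;>
    choose a ha using hv <;> choose b hb using hw
  · exact .inl fun i => ⟨a i - b i, by simp [ha, hb]⟩
  · exact .inr fun i => ⟨a i - b i - 1, by simp [ha, hb]; ring⟩
  · exact .inr fun i => ⟨a i - b i, by simp [ha, hb]; ring⟩
  · exact .inl fun i => ⟨a i - b i, by simp [ha, hb]⟩

theorem single [DecidableEq ι] (i : ι) (m : ℤ) : IntegralOrHalfIntegral (Pi.single i (m : ℝ)) :=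
  .inl fun j => by
    rcases eq_or_ne j i with rfl | hj
    · exact ⟨m, by simp⟩
    · exact ⟨0, by simp [hj]⟩

theorem halfSign_comp (v : ι → ℝ) : IntegralOrHalfIntegral fun i => halfSign (v i) :=
  .inr fun i => by
    rcases halfSign_eq_or (v i) with h | h
    · exact ⟨0, by dsimp only; rw [h]; norm_num⟩
    · exact ⟨-1, by dsimp only; rw [h]; norm_num⟩

end IntegralOrHalfIntegral

namespace DnDominant

variable {n : ℕ} {lam : Fin n → ℝ}

theorem integralOrHalfIntegral (h : DnDominant lam) : IntegralOrHalfIntegral lam := h.2.2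

theorem sub_halfSign (h : DnDominant lam) : DnDominant (lam - fun i => halfSign (lam i)) := by
  have hpar := h.integralOrHalfIntegral
  refine ⟨fun i j hij hj => ?_, fun i hi j hj => ?_, hpar.sub (.halfSign_comp lam)⟩
  · exact sub_halfSign_le_sub_halfSign (h.1 i j hij hj) (hpar.exists_sub_eq_intCast i j)
  · exact abs_sub_halfSign_le_sub_halfSign (h.2.1 i hi j hj)
      (hpar.exists_sub_eq_intCast i j) (hpar.exists_two_mul_eq_intCast j)

theorem sub_single_zero (hn : 2 < n) (h : DnDominant lam)
    (hlt : lam ⟨1, by omega⟩ < lam ⟨0, by omega⟩) :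
    DnDominant (lam - Pi.single ⟨0, by omega⟩ 1) := by
  set i₀ : Fin n := ⟨0, by omega⟩
  set i₁ : Fin n := ⟨1, by omega⟩
  have hgap : lam i₁ + 1 ≤ lam i₀ :=
    add_one_le_of_lt_of_sub_eq_intCast (h.integralOrHalfIntegral.exists_sub_eq_intCast _ _) hlt
  have hμ₀ : (lam - Pi.single i₀ 1 : Fin n → ℝ) i₀ = lam i₀ - 1 := by simp
  have hμ : ∀ k, k ≠ i₀ → (lam - Pi.single i₀ 1 : Fin n → ℝ) k = lam k := fun k hk => by
    simp [hk]
  have hne : ∀ k : Fin n, k ≠ i₀ → i₁ ≤ k := fun k hk => by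
    have := Fin.val_ne_of_ne hk
    rw [Fin.le_def]
    simp only [i₀, i₁] at this ⊢
    omega
  refine ⟨fun i j hij hj => ?_, fun i hi j hj => ?_,
    h.integralOrHalfIntegral.sub (by exact_mod_cast IntegralOrHalfIntegral.single i₀ 1)⟩
  · rcases eq_or_ne j i₀ with rfl | hj₀
    · rw [le_antisymm hij (Fin.le_def.mpr (Nat.zero_le _))]
    rw [hμ j hj₀]
    rcases eq_or_ne i i₀ with rfl | hi₀
    · linarith [h.1 i₁ j (hne j hj₀) hj]
    · rw [hμ i hi₀]
      exact h.1 i j hij hj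
  · have hj₀ : j ≠ i₀ := fun hj₀ => by simp [hj₀, i₀] at hj; omega
    rw [hμ j hj₀]
    rcases eq_or_ne i i₀ with rfl | hi₀
    · linarith [h.2.1 i₁ (by simp [i₁]; omega) j hj]
    · rw [hμ i hi₀]
      exact h.2.1 i hi j hj

end DnDominant

/-- Every `D_n`-dominant weight admissible at level `ℓ` can be decremented by a weight of a
minimal representation (trivial, vector, or one of the two spin modules) so as to stay
dominant and become admissible at level `ℓ − 1`. -/
theorem dominant_weight_peel_minimal (n ℓ : ℕ) (hn : 3 ≤ n) (hℓ : 1 ≤ ℓ)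
    (lam : Fin n → ℝ) (hdom : DnDominant lam)
    (hlevel : lam ⟨0, by omega⟩ + lam ⟨1, by omega⟩ ≤ (ℓ : ℝ)) :
    ∃ ν : Fin n → ℝ,
      (ν = 0 ∨ (∃ i : Fin n, ν = Pi.single i 1 ∨ ν = -Pi.single i 1) ∨
        (∀ i, ν i = 1 / 2 ∨ ν i = -(1 / 2))) ∧
      DnDominant (lam - ν) ∧
      (lam - ν) ⟨0, by omega⟩ + (lam - ν) ⟨1, by omega⟩ ≤ (ℓ : ℝ) - 1 := by
  set i₀ : Fin n := ⟨0, by omega⟩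
  set i₁ : Fin n := ⟨1, by omega⟩
  by_cases hlow : lam i₀ + lam i₁ ≤ ℓ - 1
  · exact ⟨0, .inl rfl, by simpa using hdom, by simpa using hlow⟩
  have hi₁₀ : i₁ ≠ i₀ := by simp [i₀, i₁, Fin.ext_iff]
  by_cases hlt : lam i₁ < lam i₀
  · refine ⟨Pi.single i₀ 1, .inr (.inl ⟨i₀, .inl rfl⟩), hdom.sub_single_zero (by omega) hlt, ?_⟩
    simp only [Pi.sub_apply, Pi.single_eq_same, Pi.single_eq_of_ne hi₁₀]
    linarith
  have heq : lam i₀ = lam i₁ :=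
    le_antisymm (not_lt.mp hlt)
      (hdom.1 i₀ i₁ (Fin.le_def.mpr (Nat.zero_le _)) (by simp [i₁]; omega))
  have hℓ' : (1 : ℝ) ≤ ℓ := by exact_mod_cast hℓ
  have hpos₀ : 0 < lam i₀ := by linarith
  have hpos₁ : 0 < lam i₁ := by linarith
  refine ⟨fun i => halfSign (lam i), .inr (.inr fun i => halfSign_eq_or (lam i)),
    hdom.sub_halfSign, ?_⟩
  simp only [Pi.sub_apply, halfSign, if_pos hpos₀, if_pos hpos₁]
  linarith
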